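/- arXiv:1911.05416 — 2 statements merged into one kernel-verified Lean document; each statement's English description precedes it below -/
import Mathlib

section
/- Let φ be a 3-SAT formula with clauses C_1,…,C_m over variables x_1,…,x_n, and consider the cake-cutting instance constructed from φ as described. Let 0 ≤ ε ≤ 0.01. If this instance admits a contiguous ε-envy-free allocation in which at most 2m+n of the cuts lie strictly inside the union of the Clause-Gadgets and the Variable-Gadgets, then φ is satisfiable. -/
/-- The agents of the cake-cutting instance built from a 3-SAT formula with `m` clauses
and `n` variables: clause agents `C i k`, variable agents `L j`, `R j`, the agents
`S 0, …, S (m+n-1)` and the agent `S₀'`. -/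
inductive CakeAgent (m n : ℕ) : Type where
  | cl : Fin m → Fin 3 → CakeAgent m n      -- clause agent C_i^k
  | lt : Fin n → CakeAgent m n              -- variable agent L_j
  | rt : Fin n → CakeAgent m n              -- variable agent R_j
  | sep : Fin (m + n) → CakeAgent m n       -- agents S_0, S_1, …, S_{m+n-1}
  | sep' : CakeAgent m n                    -- agent S_0'

/-- Indicator density of the interval `[s, t]` (a block of height 1). -/
noncomputable def blockInd (s t x : ℝ) : ℝ := if s ≤ x ∧ x ≤ t then 1 else 0

/-- Left endpoint of the Clause-Gadget of clause `i` (`0`-indexed). -/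
def clauseStart {m : ℕ} (i : Fin m) : ℝ := 3 + 12 * (i : ℕ)

/-- Left endpoint of the Variable-Gadget of variable `j` (`0`-indexed). -/
def varStart (m : ℕ) {n : ℕ} (j : Fin n) : ℝ := 3 + 12 * m + 7 * (j : ℕ)

/-- Left endpoint of the Isolating Interval `I_k` (with `I_0` the Initiation Interval). -/
def isoStart (m : ℕ) (k : ℕ) : ℝ :=
  if k = 0 then 0 else if k ≤ m then 12 * k else 12 * m + 7 * (k - m)

/-- The density of each agent of the instance built from the 3-SAT formula `φ`
(`φ i k = (j, pol)` means the `k`-th literal of clause `i` is `x_j` if `pol = true`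
and `¬ x_j` if `pol = false`). All blocks have height 1. -/
noncomputable def cakeDensity (m n : ℕ) (φ : Fin m → Fin 3 → Fin n × Bool) :
    CakeAgent m n → ℝ → ℝ
  | .cl i k => fun x =>
      blockInd (clauseStart i + (k : ℕ)) (clauseStart i + (k : ℕ) + 0.24) x +
      blockInd (clauseStart i + (k : ℕ) + 3) (clauseStart i + (k : ℕ) + 3.24) x +
      blockInd (clauseStart i + (k : ℕ) + 6) (clauseStart i + (k : ℕ) + 6.24) x +
      blockInd (varStart m (φ i k).1 + (if (φ i k).2 then 1.5 else 2.5) - 0.14)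
               (varStart m (φ i k).1 + (if (φ i k).2 then 1.5 else 2.5) + 0.14) x
  | .lt j => fun x => blockInd (varStart m j) (varStart m j + 1) x
  | .rt j => fun x => blockInd (varStart m j + 3) (varStart m j + 4) x
  | .sep k => fun x =>
      if k.val = 0 then
        blockInd (0.5 - 1/14) (0.5 + 1/14) x +
        blockInd (2.5 - 1/7) (2.5 + 1/7) x +
        blockInd (isoStart m 1 + 0.5 - 1/7) (isoStart m 1 + 0.5 + 1/7) x +
        blockInd (isoStart m 1 + 2.5 - 1/7) (isoStart m 1 + 2.5 + 1/7) x
      else if k.val = m + n - 1 then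
        blockInd (isoStart m k.val + 1) (isoStart m k.val + 2) x
      else
        blockInd (isoStart m k.val + 1.5 - 0.1) (isoStart m k.val + 1.5 + 0.1) x +
        blockInd (isoStart m (k.val + 1) + 0.5 - 0.2) (isoStart m (k.val + 1) + 0.5 + 0.2) x +
        blockInd (isoStart m (k.val + 1) + 2.5 - 0.2) (isoStart m (k.val + 1) + 2.5 + 0.2) x
  | .sep' => fun x => blockInd 1 2 x

/-- Satisfiability of the 3-SAT formula `φ`. -/
def SatFormula (m n : ℕ) (φ : Fin m → Fin 3 → Fin n × Bool) : Prop :=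
  ∃ a : Fin n → Bool, ∀ i : Fin m, ∃ k : Fin 3, a (φ i k).1 = (φ i k).2

/-- Value of agent `A` for the piece `[s, t]`. -/
noncomputable def cakeVal (m n : ℕ) (φ : Fin m → Fin 3 → Fin n × Bool)
    (A : CakeAgent m n) (s t : ℝ) : ℝ :=
  ∫ x in s..t, cakeDensity m n φ A x

/-- A point lies strictly inside a Clause-Gadget or a Variable-Gadget. -/
def InGadgetInterior (m n : ℕ) (x : ℝ) : Prop :=
  (∃ i : Fin m, clauseStart i < x ∧ x < clauseStart i + 9) ∨
  (∃ j : Fin n, varStart m j < x ∧ x < varStart m j + 4)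

/-!
Only the clause agents and the agents `L j`, `R j` matter. An agent valuing a piece at more than
half of its total plus `ε` must own it, and one valuing two pieces together at more than two
thirds of its total plus `ε` must own one of them. Hence a Variable-Gadget without interior cut
would give one piece to both `L j` and `R j`, and a Clause-Gadget with at most one interior cut
would give at most two pieces to its three clause agents. The budget of `2m + n` cuts then
leaves exactly one cut `c_j` inside the gadget `[b, b + 4]` of `x_j` and exactly two cuts, hence
three pieces, inside each Clause-Gadget.

Make `x_j` true iff `y c_j ≤ b + 2.36`, the left end of the `¬x_j`-block. For a false literal,
the `0.28`-block of the clause agent lies inside one piece, and every piece meeting it is owned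
by `L j` or `R j`; so envy-freeness forces the agent to get `0.27` from its three `0.24`-blocks
in the Clause-Gadget `[a, a + 9]`. If a clause had three false literals, its three agents would
own the three pieces of the gadget; the owners of the outer pieces push the two cuts into
`[a + 3.03, a + 5.21]`, which leaves at most `0.24` to the owner of the middle piece.
-/

open MeasureTheory Set

def overlap (s t u v : ℝ) : ℝ := max 0 (min t v - max s u)

lemma overlap_nonneg (s t u v : ℝ) : 0 ≤ overlap s t u v := le_max_left _ _

lemma overlap_le_sub_left (s t u v : ℝ) : overlap s t u v ≤ max 0 (t - u) :=
  max_le_max le_rfl (by linarith [min_le_left t v, le_max_right s u])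

lemma overlap_le_sub_right (s t u v : ℝ) : overlap s t u v ≤ max 0 (v - s) :=
  max_le_max le_rfl (by linarith [min_le_right t v, le_max_left s u])

lemma overlap_le_length {u v : ℝ} (s t : ℝ) (huv : u ≤ v) : overlap s t u v ≤ v - u :=
  max_le (by linarith) (by linarith [min_le_right t v, le_max_right s u])

lemma overlap_eq_length {s t u v : ℝ} (hs : s ≤ u) (ht : v ≤ t) (huv : u ≤ v) :
    overlap s t u v = v - u := by
  rw [overlap, min_eq_right ht, max_eq_right hs, max_eq_right (sub_nonneg.2 huv)]

lemma lt_and_lt_of_overlap_pos {s t u v : ℝ} (h : 0 < overlap s t u v) : s < v ∧ u < t := by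
  simp only [overlap, lt_max_iff, lt_irrefl, false_or, sub_pos, max_lt_iff, lt_min_iff] at h
  exact ⟨h.2.1, h.1.2⟩

def clauseOverlap (w s t : ℝ) : ℝ :=
  overlap s t w (w + 0.24) + overlap s t (w + 3) (w + 3.24) + overlap s t (w + 6) (w + 6.24)

lemma clauseOverlap_le (w s t : ℝ) : clauseOverlap w s t ≤ 0.72 := by
  have := overlap_le_length s t (show w ≤ w + 0.24 by norm_num)
  have := overlap_le_length s t (show w + 3 ≤ w + 3.24 by norm_num)
  have := overlap_le_length s t (show w + 6 ≤ w + 6.24 by norm_num)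
  unfold clauseOverlap; linarith

lemma clauseOverlap_nonneg (w s t : ℝ) : 0 ≤ clauseOverlap w s t := by
  unfold clauseOverlap
  linarith [overlap_nonneg s t w (w + 0.24), overlap_nonneg s t (w + 3) (w + 3.24),
    overlap_nonneg s t (w + 6) (w + 6.24)]

lemma clauseOverlap_eq_of_le_of_le {w s t : ℝ} (hs : s ≤ w) (ht : w + 6.24 ≤ t) :
    clauseOverlap w s t = 0.72 := by
  rw [clauseOverlap, overlap_eq_length hs (by linarith) (by linarith),
    overlap_eq_length (by linarith) (by linarith) (by linarith),
    overlap_eq_length (by linarith) ht (by linarith)]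
  norm_num

lemma lt_and_lt_of_clauseOverlap_pos {w s t : ℝ} (h : 0 < clauseOverlap w s t) :
    s < w + 6.24 ∧ w < t := by
  unfold clauseOverlap at h
  obtain h | h | h : 0 < overlap s t w (w + 0.24) ∨ 0 < overlap s t (w + 3) (w + 3.24) ∨
      0 < overlap s t (w + 6) (w + 6.24) := by
    by_contra! h'
    linarith
  all_goals have := lt_and_lt_of_overlap_pos h; constructor <;> linarith

lemma add_le_of_le_clauseOverlap {w s t : ℝ} (h : 0.27 ≤ clauseOverlap w s t) :
    w + 3.03 ≤ t := by
  by_contra! ht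
  have h1 := overlap_le_length s t (show w ≤ w + 0.24 by linarith)
  have h2 : overlap s t (w + 3) (w + 3.24) < 0.03 :=
    (overlap_le_sub_left _ _ _ _).trans_lt (max_lt (by norm_num) (by linarith))
  have h3 : overlap s t (w + 6) (w + 6.24) ≤ 0 :=
    (overlap_le_sub_left _ _ _ _).trans (max_le le_rfl (by linarith))
  unfold clauseOverlap at h
  linarith

lemma le_add_of_le_clauseOverlap {w s t : ℝ} (h : 0.27 ≤ clauseOverlap w s t) :
    s ≤ w + 3.21 := by
  by_contra! hs
  have h1 : overlap s t w (w + 0.24) ≤ 0 :=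
    (overlap_le_sub_right _ _ _ _).trans (max_le le_rfl (by linarith))
  have h2 : overlap s t (w + 3) (w + 3.24) < 0.03 :=
    (overlap_le_sub_right _ _ _ _).trans_lt (max_lt (by norm_num) (by linarith))
  have h3 := overlap_le_length s t (show w + 6 ≤ w + 6.24 by linarith)
  unfold clauseOverlap at h
  linarith

lemma clauseOverlap_le_of_le_of_le {w s t : ℝ} (hs : w + 0.24 ≤ s) (ht : t ≤ w + 6) :
    clauseOverlap w s t ≤ 0.24 := by
  have h1 : overlap s t w (w + 0.24) ≤ 0 :=
    (overlap_le_sub_right _ _ _ _).trans (max_le le_rfl (by linarith))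
  have h2 := overlap_le_length s t (show w + 3 ≤ w + 3.24 by linarith)
  have h3 : overlap s t (w + 6) (w + 6.24) ≤ 0 :=
    (overlap_le_sub_left _ _ _ _).trans (max_le le_rfl (by linarith))
  unfold clauseOverlap
  linarith

lemma blockInd_eq_indicator (u v : ℝ) : blockInd u v = (Icc u v).indicator 1 := by
  ext x
  simp [blockInd, Set.indicator_apply]

@[fun_prop]
lemma integrable_blockInd (u v : ℝ) : Integrable (blockInd u v) := by
  rw [blockInd_eq_indicator, integrable_indicator_iff measurableSet_Icc]
  exact integrableOn_const measure_Icc_lt_top.ne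

lemma integral_blockInd (u v : ℝ) {s t : ℝ} (hst : s ≤ t) :
    ∫ x in s..t, blockInd u v x = overlap s t u v := by
  rw [blockInd_eq_indicator, intervalIntegral.integral_of_le hst, ← integral_Icc_eq_integral_Ioc,
    setIntegral_indicator measurableSet_Icc, Icc_inter_Icc]
  simp [measureReal_def, Real.volume_Icc, ENNReal.toReal_ofReal', overlap, max_comm]

lemma cakeDensity_nonneg (m n : ℕ) (φ : Fin m → Fin 3 → Fin n × Bool) (A : CakeAgent m n) :
    0 ≤ cakeDensity m n φ A := fun x => by
  cases A <;> simp only [cakeDensity, blockInd] <;> split_ifs <;> norm_num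

lemma integrable_cakeDensity (m n : ℕ) (φ : Fin m → Fin 3 → Fin n × Bool) (A : CakeAgent m n) :
    Integrable (cakeDensity m n φ A) := by
  cases A <;> simp only [cakeDensity] <;> (try split_ifs) <;> fun_prop

lemma sum_integral_pieces {N : ℕ} {f : ℝ → ℝ} (hf : Integrable f) (y : Fin (N + 1) → ℝ) :
    ∑ t : Fin N, ∫ x in y t.castSucc..y t.succ, f x = ∫ x in y 0..y (Fin.last N), f x := by
  induction N with
  | zero => simp
  | succ N ih =>
    have h := ih fun k => y k.castSucc
    simp only [Fin.castSucc_zero] at h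
    rw [Fin.sum_univ_castSucc]
    simp only [Fin.succ_castSucc]
    rw [h, ← Fin.succ_last]
    exact intervalIntegral.integral_add_adjacent_intervals hf.intervalIntegrable
      hf.intervalIntegrable

lemma sum_integral_pieces_le {N : ℕ} {f : ℝ → ℝ} (hf : Integrable f) (hf0 : 0 ≤ f)
    {y : Fin (N + 1) → ℝ} (hy : Monotone y) (S : Finset (Fin N)) :
    ∑ t ∈ S, ∫ x in y t.castSucc..y t.succ, f x ≤ ∫ x in y 0..y (Fin.last N), f x := by
  rw [← sum_integral_pieces hf y]
  exact Finset.sum_le_sum_of_subset_of_nonneg (Finset.subset_univ S) fun t _ _ =>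
    intervalIntegral.integral_nonneg (hy (Fin.castSucc_le_succ t)) fun x _ => hf0 x

lemma cast_fin_three_le (k : Fin 3) : ((k : ℕ) : ℝ) ≤ 2 := by
  exact_mod_cast Nat.le_of_lt_succ k.isLt

section Values

variable {m n : ℕ} {φ : Fin m → Fin 3 → Fin n × Bool}

lemma cakeVal_add (A : CakeAgent m n) (s t u : ℝ) :
    cakeVal m n φ A s t + cakeVal m n φ A t u = cakeVal m n φ A s u :=
  intervalIntegral.integral_add_adjacent_intervals
    (integrable_cakeDensity m n φ A).intervalIntegrable
    (integrable_cakeDensity m n φ A).intervalIntegrable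

def literalCenter (m : ℕ) {n : ℕ} (l : Fin n × Bool) : ℝ :=
  varStart m l.1 + if l.2 then 1.5 else 2.5

lemma cakeVal_cl (i : Fin m) (k : Fin 3) {s t : ℝ} (hst : s ≤ t) :
    cakeVal m n φ (.cl i k) s t = clauseOverlap (clauseStart i + (k : ℕ)) s t +
      overlap s t (literalCenter m (φ i k) - 0.14) (literalCenter m (φ i k) + 0.14) := by
  have hb := fun u v => (integrable_blockInd u v).intervalIntegrable (a := s) (b := t)
  simp only [cakeVal, cakeDensity]
  rw [intervalIntegral.integral_add (((hb _ _).add (hb _ _)).add (hb _ _)) (hb _ _),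
    intervalIntegral.integral_add ((hb _ _).add (hb _ _)) (hb _ _),
    intervalIntegral.integral_add (hb _ _) (hb _ _)]
  simp only [integral_blockInd _ _ hst]
  rfl

lemma cakeVal_lt (j : Fin n) {s t : ℝ} (hst : s ≤ t) :
    cakeVal m n φ (.lt j) s t = overlap s t (varStart m j) (varStart m j + 1) :=
  integral_blockInd _ _ hst

lemma cakeVal_rt (j : Fin n) {s t : ℝ} (hst : s ≤ t) :
    cakeVal m n φ (.rt j) s t = overlap s t (varStart m j + 3) (varStart m j + 4) :=
  integral_blockInd _ _ hst

lemma cakeVal_cl_le_one (i : Fin m) (k : Fin 3) {s t : ℝ} (hst : s ≤ t) :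
    cakeVal m n φ (.cl i k) s t ≤ 1 := by
  rw [cakeVal_cl i k hst]
  linarith [clauseOverlap_le (clauseStart i + (k : ℕ)) s t,
    overlap_le_length s t
      (show literalCenter m (φ i k) - 0.14 ≤ literalCenter m (φ i k) + 0.14 by linarith)]

lemma cakeVal_lt_le_one (j : Fin n) {s t : ℝ} (hst : s ≤ t) : cakeVal m n φ (.lt j) s t ≤ 1 := by
  rw [cakeVal_lt j hst]
  linarith [overlap_le_length s t (show varStart m j ≤ varStart m j + 1 by linarith)]

lemma cakeVal_rt_le_one (j : Fin n) {s t : ℝ} (hst : s ≤ t) : cakeVal m n φ (.rt j) s t ≤ 1 := by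
  rw [cakeVal_rt j hst]
  linarith [overlap_le_length s t (show varStart m j + 3 ≤ varStart m j + 4 by linarith)]

lemma injective_cl {N : ℕ} (π : CakeAgent m n ≃ Fin N) (i : Fin m) :
    Function.Injective fun k : Fin 3 => π (.cl i k) := fun k k' h => by
  simpa using π.injective h

lemma le_cakeVal_cl (i : Fin m) (k : Fin 3) {s t : ℝ} (hs : s ≤ clauseStart i)
    (ht : clauseStart i + 9 ≤ t) :
    0.72 ≤ cakeVal m n φ (.cl i k) s t := by
  have hk0 : (0 : ℝ) ≤ (k : ℕ) := Nat.cast_nonneg _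
  have hk2 := cast_fin_three_le k
  rw [cakeVal_cl i k (by linarith), clauseOverlap_eq_of_le_of_le (by linarith) (by linarith)]
  linarith [overlap_nonneg s t (literalCenter m (φ i k) - 0.14) (literalCenter m (φ i k) + 0.14)]

end Values

section Cuts

variable {N : ℕ} {y : Fin (N + 1) → ℝ} {c d : ℝ}

open Classical in
noncomputable def cutsIn (y : Fin (N + 1) → ℝ) (S : Set ℝ) : Finset (Fin (N + 1)) :=
  Finset.univ.filter fun k => y k ∈ S

@[simp] lemma mem_cutsIn {S : Set ℝ} {k : Fin (N + 1)} : k ∈ cutsIn y S ↔ y k ∈ S := by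
  simp [cutsIn]

lemma le_of_notMem_cutsIn {k : Fin (N + 1)} (hk : k ∉ cutsIn y (Ioo c d)) (hkd : y k < d) :
    y k ≤ c := by
  by_contra! hck
  exact hk (mem_cutsIn.2 ⟨hck, hkd⟩)

lemma ge_of_notMem_cutsIn {k : Fin (N + 1)} (hk : k ∉ cutsIn y (Ioo c d)) (hck : c < y k) :
    d ≤ y k := by
  by_contra! hkd
  exact hk (mem_cutsIn.2 ⟨hck, hkd⟩)

lemma exists_piece_superset_of_cutsIn_eq_empty (hc : y 0 ≤ c) (hcd : c < d)
    (hd : d ≤ y (Fin.last N)) (hno : cutsIn y (Ioo c d) = ∅) :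
    ∃ t : Fin N, y t.castSucc ≤ c ∧ d ≤ y t.succ := by
  by_contra! h
  have hle : ∀ k, y k ≤ c := Fin.induction hc fun t ht =>
    le_of_notMem_cutsIn (by simp [hno]) (h t ht)
  linarith [hle (Fin.last N)]

lemma mem_cutsIn_of_meets (hy : Monotone y) {k : Fin (N + 1)} (hk : k ∈ cutsIn y (Ioo c d))
    {t : Fin N} (htd : y t.castSucc < d) (hct : c < y t.succ) :
    t.castSucc ∈ cutsIn y (Ioo c d) ∨ t.succ ∈ cutsIn y (Ioo c d) := by
  rw [mem_cutsIn] at hk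
  by_contra! h
  have h1 := le_of_notMem_cutsIn h.1 htd
  have h2 := ge_of_notMem_cutsIn h.2 hct
  rcases le_or_gt k t.castSucc with hkt | hkt
  · linarith [hy hkt, hk.1]
  · linarith [hy (Fin.castSucc_lt_iff_succ_le.1 hkt), hk.2]

lemma exists_pieces_of_cutsIn_eq_singleton (hy : Monotone y) (hc : y 0 ≤ c)
    (hd : d ≤ y (Fin.last N)) {k : Fin (N + 1)} (hk : cutsIn y (Ioo c d) = {k}) :
    ∃ s t : Fin N, s.succ = k ∧ t.castSucc = k ∧ y s.castSucc ≤ c ∧ d ≤ y t.succ ∧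
      ∀ r : Fin N, y r.castSucc < d → c < y r.succ → r = s ∨ r = t := by
  have hkmem : k ∈ cutsIn y (Ioo c d) := by simp [hk]
  have hyk := mem_cutsIn.1 hkmem
  have hk0 : k ≠ 0 := by rintro rfl; linarith [hyk.1]
  have hkL : k ≠ Fin.last N := by rintro rfl; linarith [hyk.2]
  set s := k.pred hk0
  set t := k.castPred hkL
  have hs : s.succ = k := Fin.succ_pred _ _
  have ht : t.castSucc = k := Fin.castSucc_castPred _ _
  refine ⟨s, t, hs, ht, ?_, ?_, ?_⟩
  · refine le_of_notMem_cutsIn (d := d) ?_ ?_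
    · rw [hk, Finset.mem_singleton, ← hs]
      exact Fin.castSucc_lt_succ.ne
    exact (hy (hs ▸ Fin.castSucc_le_succ s)).trans_lt hyk.2
  · refine ge_of_notMem_cutsIn (c := c) ?_ ?_
    · rw [hk, Finset.mem_singleton, ← ht]
      exact Fin.castSucc_lt_succ.ne'
    exact hyk.1.trans_le (hy (ht ▸ Fin.castSucc_le_succ t))
  · intro r hrd hcr
    rcases mem_cutsIn_of_meets hy hkmem hrd hcr with h | h <;> rw [hk, Finset.mem_singleton] at h
    · exact Or.inr (Fin.castSucc_injective _ (h.trans ht.symm))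
    · exact Or.inl (Fin.succ_injective _ (h.trans hs.symm))

lemma exists_pieces_of_card_cutsIn_eq_two (hy : Monotone y) (hc : y 0 ≤ c)
    (hd : d ≤ y (Fin.last N)) (h2 : (cutsIn y (Ioo c d)).card = 2) :
    ∃ t₁ t₂ t₃ : Fin N, t₁.succ = t₂.castSucc ∧ t₂.succ = t₃.castSucc ∧ y t₁.castSucc ≤ c ∧
      d ≤ y t₃.succ ∧ ∀ r : Fin N, y r.castSucc < d → c < y r.succ → r = t₁ ∨ r = t₂ ∨ r = t₃ := by
  obtain ⟨p, q, hpq, hK⟩ := Finset.card_eq_two.1 h2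
  wlog hlt : p < q generalizing p q
  · exact this q p hpq.symm (by rw [hK, Finset.pair_comm]) (hpq.lt_or_gt.resolve_left hlt)
  have hpK : p ∈ cutsIn y (Ioo c d) := by simp [hK]
  have hp := mem_cutsIn.1 hpK
  have hq := mem_cutsIn.1 (show q ∈ cutsIn y (Ioo c d) by simp [hK])
  have hp0 : p ≠ 0 := by rintro rfl; linarith [hp.1]
  have hqL : q ≠ Fin.last N := by rintro rfl; linarith [hq.2]
  set t₁ := p.pred hp0
  set t₂ := p.castPred (Fin.ne_last_of_lt hlt)
  set t₃ := q.castPred hqL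
  have h₁ : t₁.succ = p := Fin.succ_pred _ _
  have h₂ : t₂.castSucc = p := Fin.castSucc_castPred _ _
  have h₃ : t₃.castSucc = q := Fin.castSucc_castPred _ _
  have h₂' : t₂.succ = q := by
    have hle : t₂.succ ≤ q := Fin.castSucc_lt_iff_succ_le.1 (h₂ ▸ hlt)
    have hmem : t₂.succ ∈ cutsIn y (Ioo c d) :=
      mem_cutsIn.2 ⟨hp.1.trans_le (hy (h₂ ▸ Fin.castSucc_le_succ t₂)), (hy hle).trans_lt hq.2⟩
    rw [hK, Finset.mem_insert, Finset.mem_singleton, ← h₂] at hmem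
    exact hmem.resolve_left Fin.castSucc_lt_succ.ne'
  refine ⟨t₁, t₂, t₃, h₁.trans h₂.symm, h₂'.trans h₃.symm, ?_, ?_, ?_⟩
  · refine le_of_notMem_cutsIn (d := d) ?_ ((hy (h₁ ▸ Fin.castSucc_le_succ t₁)).trans_lt hp.2)
    rw [hK, Finset.mem_insert, Finset.mem_singleton, not_or, ← h₁]
    exact ⟨Fin.castSucc_lt_succ.ne, (Fin.castSucc_lt_succ.trans (h₁ ▸ hlt)).ne⟩
  · refine ge_of_notMem_cutsIn (c := c) ?_ (hq.1.trans_le (hy (h₃ ▸ Fin.castSucc_le_succ t₃)))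
    rw [hK, Finset.mem_insert, Finset.mem_singleton, not_or, ← h₃]
    exact ⟨((h₃ ▸ hlt).trans Fin.castSucc_lt_succ).ne', Fin.castSucc_lt_succ.ne'⟩
  · intro r hrd hcr
    rcases mem_cutsIn_of_meets hy hpK hrd hcr with h | h <;>
      rw [hK, Finset.mem_insert, Finset.mem_singleton] at h <;> rcases h with h | h
    · exact Or.inr (Or.inl (Fin.castSucc_injective _ (h.trans h₂.symm)))
    · exact Or.inr (Or.inr (Fin.castSucc_injective _ (h.trans h₃.symm)))
    · exact Or.inl (Fin.succ_injective _ (h.trans h₁.symm))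
    · exact Or.inr (Or.inl (Fin.succ_injective _ (h.trans h₂'.symm)))

end Cuts

section Envy

variable {m n N : ℕ} {φ : Fin m → Fin 3 → Fin n × Bool} {ε : ℝ} {y : Fin (N + 1) → ℝ}
  {π : CakeAgent m n ≃ Fin N}

lemma sum_cakeVal_pieces_le (hy : Monotone y) (A : CakeAgent m n) (S : Finset (Fin N)) :
    ∑ t ∈ S, cakeVal m n φ A (y t.castSucc) (y t.succ) ≤ cakeVal m n φ A (y 0) (y (Fin.last N)) :=
  sum_integral_pieces_le (integrable_cakeDensity m n φ A) (cakeDensity_nonneg m n φ A) hy S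

variable (m n φ ε y π) in
def IsEnvyFreeUpTo : Prop :=
  ∀ A B : CakeAgent m n, cakeVal m n φ A (y (π A).castSucc) (y (π A).succ) ≥
    cakeVal m n φ A (y (π B).castSucc) (y (π B).succ) - ε

namespace IsEnvyFreeUpTo

lemma sub_le_own (h : IsEnvyFreeUpTo m n φ ε y π) (A : CakeAgent m n) (t : Fin N) :
    cakeVal m n φ A (y t.castSucc) (y t.succ) - ε ≤
      cakeVal m n φ A (y (π A).castSucc) (y (π A).succ) := by
  simpa using h A (π.symm t)

lemma eq_of_two_mul_gt (h : IsEnvyFreeUpTo m n φ ε y π) (hy : Monotone y) {A : CakeAgent m n}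
    {t : Fin N} (hA : cakeVal m n φ A (y 0) (y (Fin.last N)) + ε <
      2 * cakeVal m n φ A (y t.castSucc) (y t.succ)) : π A = t := by
  by_contra hne
  have := sum_cakeVal_pieces_le (φ := φ) hy A {π A, t}
  rw [Finset.sum_pair hne] at this
  linarith [h.sub_le_own A t]

lemma eq_or_eq_of_three_mul_gt (h : IsEnvyFreeUpTo m n φ ε y π) (hy : Monotone y)
    {A : CakeAgent m n} {s t : Fin N} (hst : s ≠ t)
    (hA : 2 * (cakeVal m n φ A (y 0) (y (Fin.last N)) + ε) <
      3 * (cakeVal m n φ A (y s.castSucc) (y s.succ) + cakeVal m n φ A (y t.castSucc) (y t.succ))) :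
    π A = s ∨ π A = t := by
  by_contra! hne
  have := sum_cakeVal_pieces_le (φ := φ) hy A {π A, s, t}
  rw [Finset.sum_insert (by simp [hne.1, hne.2]), Finset.sum_pair hst] at this
  linarith [h.sub_le_own A s, h.sub_le_own A t]

lemma apply_lt_eq (h : IsEnvyFreeUpTo m n φ ε y π) (hy : Monotone y) (hε : ε < 1) {j : Fin n}
    {t : Fin N} (hs : y t.castSucc ≤ varStart m j) (ht : varStart m j + 1 ≤ y t.succ) :
    π (.lt j) = t := by
  refine h.eq_of_two_mul_gt hy ?_
  rw [cakeVal_lt j (hy (Fin.castSucc_le_succ t)), overlap_eq_length hs ht (by linarith)]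
  linarith [cakeVal_lt_le_one (φ := φ) j (hy (Fin.zero_le (Fin.last N)))]

lemma apply_rt_eq (h : IsEnvyFreeUpTo m n φ ε y π) (hy : Monotone y) (hε : ε < 1) {j : Fin n}
    {t : Fin N} (hs : y t.castSucc ≤ varStart m j + 3) (ht : varStart m j + 4 ≤ y t.succ) :
    π (.rt j) = t := by
  refine h.eq_of_two_mul_gt hy ?_
  rw [cakeVal_rt j (hy (Fin.castSucc_le_succ t)), overlap_eq_length hs ht (by linarith)]
  linarith [cakeVal_rt_le_one (φ := φ) j (hy (Fin.zero_le (Fin.last N)))]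

lemma one_le_card_cutsIn_var (h : IsEnvyFreeUpTo m n φ ε y π) (hy : Monotone y) (hε : ε < 1)
    (j : Fin n) (hc : y 0 ≤ varStart m j) (hd : varStart m j + 4 ≤ y (Fin.last N)) :
    1 ≤ (cutsIn y (Ioo (varStart m j) (varStart m j + 4))).card := by
  by_contra! h0
  obtain ⟨t, hts, htd⟩ :=
    exists_piece_superset_of_cutsIn_eq_empty hc (by linarith) hd (Finset.card_eq_zero.1 (by omega))
  have hL := h.apply_lt_eq hy hε hts (by linarith)
  have hR := h.apply_rt_eq hy hε (by linarith) htd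
  cases π.injective (hL.trans hR.symm)

lemma two_le_card_cutsIn_clause (h : IsEnvyFreeUpTo m n φ ε y π) (hy : Monotone y)
    (hε : ε < 0.08) (i : Fin m) (hc : y 0 ≤ clauseStart i)
    (hd : clauseStart i + 9 ≤ y (Fin.last N)) :
    2 ≤ (cutsIn y (Ioo (clauseStart i) (clauseStart i + 9))).card := by
  have htot : ∀ k, cakeVal m n φ (.cl i k) (y 0) (y (Fin.last N)) ≤ 1 := fun k =>
    cakeVal_cl_le_one i k (hy (Fin.zero_le _))
  by_contra! hlt
  obtain h0 | h1 : (cutsIn y (Ioo (clauseStart i) (clauseStart i + 9))).card = 0 ∨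
      (cutsIn y (Ioo (clauseStart i) (clauseStart i + 9))).card = 1 := by omega
  · obtain ⟨t, hts, htd⟩ := exists_piece_superset_of_cutsIn_eq_empty hc (by linarith) hd
      (Finset.card_eq_zero.1 h0)
    have hown : ∀ k, π (.cl i k) = t := fun k =>
      h.eq_of_two_mul_gt hy (by linarith [htot k, le_cakeVal_cl (φ := φ) i k hts htd])
    exact absurd (injective_cl π i ((hown 0).trans (hown 1).symm)) (by decide)
  · obtain ⟨k₀, hk₀⟩ := Finset.card_eq_one.1 h1
    obtain ⟨s, t, hs, ht, hsc, hdt, -⟩ := exists_pieces_of_cutsIn_eq_singleton hy hc hd hk₀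
    have hadj : s.succ = t.castSucc := hs.trans ht.symm
    have hst : s ≠ t := by
      rintro rfl
      exact Fin.castSucc_lt_succ.ne' hadj
    have hown : ∀ k, π (.cl i k) ∈ ({s, t} : Finset (Fin N)) := fun k => by
      have hsum : cakeVal m n φ (.cl i k) (y s.castSucc) (y s.succ) +
          cakeVal m n φ (.cl i k) (y t.castSucc) (y t.succ) =
            cakeVal m n φ (.cl i k) (y s.castSucc) (y t.succ) := by
        rw [← hadj]
        exact cakeVal_add _ _ _ _
      simpa using h.eq_or_eq_of_three_mul_gt hy hst
        (by linarith [htot k, le_cakeVal_cl (φ := φ) i k hsc hdt])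
    have := Finset.card_le_card_of_injOn (s := Finset.univ) _ (fun k _ => hown k)
      (injective_cl π i).injOn
    simp [Finset.card_pair hst] at this

lemma literal_block_of_ne (h : IsEnvyFreeUpTo m n φ ε y π) (hy : Monotone y) (hε : ε < 1)
    {l : Fin n × Bool} {c : Fin (N + 1)} (hb : y 0 ≤ varStart m l.1)
    (hb' : varStart m l.1 + 4 ≤ y (Fin.last N))
    (hc : cutsIn y (Ioo (varStart m l.1) (varStart m l.1 + 4)) = {c})
    (hl : decide (y c ≤ varStart m l.1 + 2.36) ≠ l.2) :
    (∃ t : Fin N, y t.castSucc ≤ literalCenter m l - 0.14 ∧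
        literalCenter m l + 0.14 ≤ y t.succ) ∧
      ∀ r : Fin N, y r.castSucc < literalCenter m l + 0.14 →
        literalCenter m l - 0.14 < y r.succ → r = π (.lt l.1) ∨ r = π (.rt l.1) := by
  obtain ⟨j, pol⟩ := l
  dsimp only at hb hb' hc hl ⊢
  obtain ⟨s, t, hs, ht, hsb, hbt, hmeet⟩ := exists_pieces_of_cutsIn_eq_singleton hy hb hb' hc
  have hcb : y c ∈ Ioo (varStart m j) (varStart m j + 4) :=
    mem_cutsIn.1 (hc ▸ Finset.mem_singleton_self c)
  have hsc : y s.succ = y c := congrArg y hs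
  have htc : y t.castSucc = y c := congrArg y ht
  cases pol <;> simp only [literalCenter, ne_eq, decide_eq_true_eq, decide_eq_false_iff_not,
    not_le, if_true, Bool.false_eq_true, if_false] at hl ⊢
  · refine ⟨⟨t, by linarith, by linarith⟩, fun r hr₁ hr₂ => ?_⟩
    rcases hmeet r (by linarith [hcb.2]) (by linarith [hcb.1]) with rfl | rfl
    · linarith
    · exact Or.inr (h.apply_rt_eq hy hε (by linarith) hbt).symm
  · refine ⟨⟨s, by linarith, by linarith⟩, fun r hr₁ hr₂ => ?_⟩
    rcases hmeet r (by linarith) (by linarith) with rfl | rfl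
    · exact Or.inl (h.apply_lt_eq hy hε hsb (by linarith)).symm
    · linarith

lemma le_clauseOverlap_of_literal_block (h : IsEnvyFreeUpTo m n φ ε y π) (hy : Monotone y)
    (hε : ε ≤ 0.01) {i : Fin m} {k : Fin 3}
    (hcover : ∃ t : Fin N, y t.castSucc ≤ literalCenter m (φ i k) - 0.14 ∧
      literalCenter m (φ i k) + 0.14 ≤ y t.succ)
    (hmeet : ∀ r : Fin N, y r.castSucc < literalCenter m (φ i k) + 0.14 →
      literalCenter m (φ i k) - 0.14 < y r.succ → r = π (.lt (φ i k).1) ∨ r = π (.rt (φ i k).1)) :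
    0.27 ≤ clauseOverlap (clauseStart i + (k : ℕ)) (y (π (.cl i k)).castSucc)
      (y (π (.cl i k)).succ) := by
  obtain ⟨t, hts, htd⟩ := hcover
  have hown : overlap (y (π (.cl i k)).castSucc) (y (π (.cl i k)).succ)
      (literalCenter m (φ i k) - 0.14) (literalCenter m (φ i k) + 0.14) = 0 := by
    refine le_antisymm (not_lt.1 fun hpos => ?_) (overlap_nonneg _ _ _ _)
    obtain ⟨h₁, h₂⟩ := lt_and_lt_of_overlap_pos hpos
    rcases hmeet _ h₁ h₂ with he | he <;> cases π.injective he
  have ht : 0.28 ≤ cakeVal m n φ (.cl i k) (y t.castSucc) (y t.succ) := by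
    rw [cakeVal_cl i k (hy (Fin.castSucc_le_succ t)), overlap_eq_length hts htd (by linarith)]
    linarith [clauseOverlap_nonneg (clauseStart i + (k : ℕ)) (y t.castSucc) (y t.succ)]
  have henvy := h.sub_le_own (.cl i k) t
  rw [cakeVal_cl i k (hy (Fin.castSucc_le_succ (π (.cl i k)))), hown] at henvy
  linarith

end IsEnvyFreeUpTo

lemma not_forall_le_clauseOverlap (hy : Monotone y) {i : Fin m} (hc : y 0 ≤ clauseStart i)
    (hd : clauseStart i + 9 ≤ y (Fin.last N))
    (h2 : (cutsIn y (Ioo (clauseStart i) (clauseStart i + 9))).card = 2)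
    (π : CakeAgent m n ≃ Fin N) :
    ¬ ∀ k : Fin 3, 0.27 ≤ clauseOverlap (clauseStart i + (k : ℕ)) (y (π (.cl i k)).castSucc)
      (y (π (.cl i k)).succ) := by
  intro hk
  obtain ⟨t₁, t₂, t₃, h₁₂, h₂₃, h₁, h₃, hmeet⟩ := exists_pieces_of_card_cutsIn_eq_two hy hc hd h2
  have hk0 : ∀ k : Fin 3, (0 : ℝ) ≤ (k : ℕ) := fun k => Nat.cast_nonneg _
  have hmem : ∀ k, π (.cl i k) ∈ ({t₁, t₂, t₃} : Finset (Fin N)) := fun k => by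
    obtain ⟨hs, ht⟩ :=
      lt_and_lt_of_clauseOverlap_pos ((by norm_num : (0 : ℝ) < 0.27).trans_le (hk k))
    simpa using hmeet _ (by linarith [cast_fin_three_le k]) (by linarith [hk0 k])
  have hsurj := Finset.surjOn_of_injOn_of_card_le (s := Finset.univ) _ (fun k _ => hmem k)
    (injective_cl π i).injOn (Finset.card_le_three.trans (by simp))
  obtain ⟨k₁, -, hk₁⟩ := hsurj (by simp : t₁ ∈ ({t₁, t₂, t₃} : Finset (Fin N)))
  obtain ⟨k₂, -, hk₂⟩ := hsurj (by simp : t₂ ∈ ({t₁, t₂, t₃} : Finset (Fin N)))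
  obtain ⟨k₃, -, hk₃⟩ := hsurj (by simp : t₃ ∈ ({t₁, t₂, t₃} : Finset (Fin N)))
  have hp := add_le_of_le_clauseOverlap (hk k₁)
  have hq := le_add_of_le_clauseOverlap (hk k₃)
  have hmid := hk k₂
  rw [show π (.cl i k₁) = t₁ from hk₁, h₁₂] at hp
  rw [show π (.cl i k₃) = t₃ from hk₃, ← h₂₃] at hq
  rw [show π (.cl i k₂) = t₂ from hk₂] at hmid
  have := clauseOverlap_le_of_le_of_le (w := clauseStart i + (k₂ : ℕ))
    (by linarith [hk0 k₁, cast_fin_three_le k₂] : _ ≤ y t₂.castSucc)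
    (by linarith [hk0 k₂, cast_fin_three_le k₃] : y t₂.succ ≤ _)
  linarith

end Envy

section Counting

variable {m n : ℕ}

def gadgetStart (m : ℕ) {n : ℕ} : Fin m ⊕ Fin n → ℝ
  | .inl i => clauseStart i
  | .inr j => varStart m j

def gadgetEnd (m : ℕ) {n : ℕ} : Fin m ⊕ Fin n → ℝ
  | .inl i => clauseStart i + 9
  | .inr j => varStart m j + 4

lemma cast_add_one_le {k : ℕ} (i : Fin k) : ((i : ℕ) : ℝ) + 1 ≤ k := by
  exact_mod_cast i.isLt

lemma three_le_gadgetStart (g : Fin m ⊕ Fin n) : 3 ≤ gadgetStart m g := by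
  have := (Nat.cast_nonneg m : (0 : ℝ) ≤ m)
  rcases g with i | j <;> simp only [gadgetStart, clauseStart, varStart]
  · linarith [(Nat.cast_nonneg i : (0 : ℝ) ≤ (i : ℕ))]
  · linarith [(Nat.cast_nonneg j : (0 : ℝ) ≤ (j : ℕ))]

lemma gadgetEnd_le (g : Fin m ⊕ Fin n) : gadgetEnd m g ≤ 12 * m + 7 * n := by
  rcases g with i | j <;> simp only [gadgetEnd, clauseStart, varStart]
  · linarith [cast_add_one_le i, (Nat.cast_nonneg n : (0 : ℝ) ≤ n)]
  · linarith [cast_add_one_le j]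

lemma gadgetEnd_le_gadgetStart_or {g g' : Fin m ⊕ Fin n} (h : g ≠ g') :
    gadgetEnd m g ≤ gadgetStart m g' ∨ gadgetEnd m g' ≤ gadgetStart m g := by
  have key : ∀ {k} {a b : Fin k}, a ≠ b → ((a : ℕ) : ℝ) + 1 ≤ b ∨ ((b : ℕ) : ℝ) + 1 ≤ a :=
    fun hab => by
      rcases Fin.lt_or_lt_of_ne hab with h | h <;> [left; right] <;> exact_mod_cast h
  rcases g with i | j <;> rcases g' with i' | j' <;>
    simp only [gadgetStart, gadgetEnd, clauseStart, varStart, ne_eq, Sum.inl.injEq,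
      Sum.inr.injEq, reduceCtorEq, not_false_eq_true] at h ⊢
  · rcases key h with h | h <;> [left; right] <;> linarith
  · left; linarith [cast_add_one_le i, (Nat.cast_nonneg j' : (0 : ℝ) ≤ j')]
  · right; linarith [cast_add_one_le i', (Nat.cast_nonneg j : (0 : ℝ) ≤ j)]
  · rcases key h with h | h <;> [left; right] <;> linarith

lemma inGadgetInterior_iff {x : ℝ} :
    InGadgetInterior m n x ↔ ∃ g : Fin m ⊕ Fin n, x ∈ Ioo (gadgetStart m g) (gadgetEnd m g) := by
  simp [InGadgetInterior, Sum.exists, gadgetStart, gadgetEnd]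

lemma card_cutsIn_gadget_eq {N : ℕ} {y : Fin (N + 1) → ℝ}
    (hstart : ∀ g : Fin m ⊕ Fin n, y 0 ≤ gadgetStart m g)
    (hend : ∀ g : Fin m ⊕ Fin n, gadgetEnd m g ≤ y (Fin.last N))
    (hiso : {k : Fin (N + 1) | k ≠ 0 ∧ k ≠ Fin.last N ∧ InGadgetInterior m n (y k)}.ncard ≤
      2 * m + n)
    (hlow : ∀ g : Fin m ⊕ Fin n, Sum.elim (fun _ => 2) (fun _ => 1) g ≤
      (cutsIn y (Ioo (gadgetStart m g) (gadgetEnd m g))).card) (g : Fin m ⊕ Fin n) :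
    (cutsIn y (Ioo (gadgetStart m g) (gadgetEnd m g))).card =
      Sum.elim (fun _ => 2) (fun _ => 1) g := by
  set K := fun g : Fin m ⊕ Fin n => cutsIn y (Ioo (gadgetStart m g) (gadgetEnd m g))
  have hdisj : Set.PairwiseDisjoint ↑(Finset.univ : Finset (Fin m ⊕ Fin n)) K :=
    fun g _ g' _ hne => Finset.disjoint_left.2 fun k hk hk' => by
      have h := mem_cutsIn.1 hk
      have h' := mem_cutsIn.1 hk'
      rcases gadgetEnd_le_gadgetStart_or hne with hle | hle
      · linarith [h.2, h'.1]
      · linarith [h.1, h'.2]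
  have hsub : ((Finset.univ.biUnion K : Finset (Fin (N + 1))) : Set (Fin (N + 1))) ⊆
      {k | k ≠ 0 ∧ k ≠ Fin.last N ∧ InGadgetInterior m n (y k)} := by
    intro k hk
    obtain ⟨g, -, hg⟩ := Finset.mem_biUnion.1 hk
    have hyk := mem_cutsIn.1 hg
    refine ⟨?_, ?_, inGadgetInterior_iff.2 ⟨g, hyk⟩⟩ <;> rintro rfl
    · linarith [hstart g, hyk.1]
    · linarith [hend g, hyk.2]
  have hsum : ∑ g, (K g).card ≤ ∑ g : Fin m ⊕ Fin n, Sum.elim (fun _ => 2) (fun _ => 1) g := by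
    calc ∑ g, (K g).card = (Finset.univ.biUnion K).card := (Finset.card_biUnion hdisj).symm
      _ ≤ 2 * m + n := by
        rw [← Set.ncard_coe_finset]
        exact (Set.ncard_le_ncard hsub (Set.toFinite _)).trans hiso
      _ = ∑ g : Fin m ⊕ Fin n, Sum.elim (fun _ => 2) (fun _ => 1) g := by
        simp [Fintype.sum_sum_type, mul_comm]
  exact ((Finset.sum_eq_sum_iff_of_le fun g _ => hlow g).1 (le_antisymm
    (Finset.sum_le_sum fun g _ => hlow g) hsum) g (Finset.mem_univ g)).symm

end Counting

theorem satisfiable_of_isolated_envy_free_allocation_general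
    (m n : ℕ)
    (φ : Fin m → Fin 3 → Fin n × Bool)
    (ε : ℝ) (hε : ε ≤ 0.01)
    (y : Fin (4 * m + 3 * n + 1 + 1) → ℝ) (π : CakeAgent m n ≃ Fin (4 * m + 3 * n + 1))
    (hmono : Monotone y) (hy0 : y 0 = 0)
    (hyL : y (Fin.last (4 * m + 3 * n + 1)) = 12 * m + 7 * n + 3)
    (hEF : ∀ A B : CakeAgent m n,
      cakeVal m n φ A (y (π A).castSucc) (y (π A).succ) ≥
        cakeVal m n φ A (y (π B).castSucc) (y (π B).succ) - ε)
    (hiso : {k : Fin (4 * m + 3 * n + 1 + 1) |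
        k ≠ 0 ∧ k ≠ Fin.last (4 * m + 3 * n + 1) ∧ InGadgetInterior m n (y k)}.ncard
      ≤ 2 * m + n) :
    SatFormula m n φ := by
  have h : IsEnvyFreeUpTo m n φ ε y π := hEF
  have hstart (g : Fin m ⊕ Fin n) : y 0 ≤ gadgetStart m g := by
    linarith [three_le_gadgetStart g]
  have hend (g : Fin m ⊕ Fin n) : gadgetEnd m g ≤ y (Fin.last _) := by
    linarith [gadgetEnd_le g]
  have hcard := card_cutsIn_gadget_eq hstart hend hiso fun
    | .inl i => h.two_le_card_cutsIn_clause hmono (by linarith) i (hstart (.inl i)) (hend (.inl i))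
    | .inr j => h.one_le_card_cutsIn_var hmono (by linarith) j (hstart (.inr j)) (hend (.inr j))
  choose c hc using fun j => Finset.card_eq_one.1 (hcard (.inr j))
  refine ⟨fun j => decide (y (c j) ≤ varStart m j + 2.36), fun i => ?_⟩
  by_contra! hunsat
  refine not_forall_le_clauseOverlap hmono (hstart (.inl i)) (hend (.inl i)) (hcard (.inl i)) π
    fun k => ?_
  obtain ⟨hcover, hmeet⟩ :=
    h.literal_block_of_ne hmono (by linarith) (hstart (.inr _)) (hend (.inr _)) (hc _) (hunsat k)
  exact h.le_clauseOverlap_of_literal_block hmono hε hcover hmeet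

/-- If the cake-cutting instance constructed from the 3-SAT formula `φ`
admits a contiguous `ε`-envy-free allocation (`0 ≤ ε ≤ 0.01`) in which at most `2m + n`
of the cuts lie strictly inside the union of the Clause- and Variable-Gadgets, then `φ`
is satisfiable. -/
theorem satisfiable_of_isolated_envy_free_allocation
    (m n : ℕ) (hm : 0 < m) (hn : 0 < n)
    (φ : Fin m → Fin 3 → Fin n × Bool)
    (ε : ℝ) (hε0 : 0 ≤ ε) (hε : ε ≤ 0.01)
    (y : Fin (4 * m + 3 * n + 1 + 1) → ℝ) (π : CakeAgent m n ≃ Fin (4 * m + 3 * n + 1))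
    (hmono : Monotone y) (hy0 : y 0 = 0)
    (hyL : y (Fin.last (4 * m + 3 * n + 1)) = 12 * m + 7 * n + 3)
    (hEF : ∀ A B : CakeAgent m n,
      cakeVal m n φ A (y (π A).castSucc) (y (π A).succ) ≥
        cakeVal m n φ A (y (π B).castSucc) (y (π B).succ) - ε)
    (hiso : {k : Fin (4 * m + 3 * n + 1 + 1) |
        k ≠ 0 ∧ k ≠ Fin.last (4 * m + 3 * n + 1) ∧ InGadgetInterior m n (y k)}.ncard
      ≤ 2 * m + n) :
    SatFormula m n φ :=
  satisfiable_of_isolated_envy_free_allocation_general m n φ ε hε y π hmono hy0 hyL hEF hiso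
end

section
/- Given a 3-PARTITION instance (x_1,…,x_{3n}; B) with additionally x_i > n for all i, let K = nB and construct the following discrete instance, where a 'K-block' consists of K consecutive items together with K fresh agents each of whom values exactly those K items: from left to right the items are B consecutive K-blocks (the left region), followed by n blocks of K+B items each, where each such block consists of a K-block followed by B further items (the right region); in addition there are agents a_1,…,a_{3n}, where agent a_i values exactly the K·x_i rightmost items. Then: (i) this instance admits a contiguous equitable allocation in which every agent receives strictly positive value if and only if the 3-PARTITION instance has a solution; and (ii) this instance admits a contiguous allocation that is both proportional and equitable if and only if the 3-PARTITION instance has a solution. -/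
/-- `owner` is a contiguous allocation of the items `Fin M` (items numbered from left to
right) to the agents of type `A`: each agent's set of items is a (possibly empty) set of
consecutive items. -/
def ContigAlloc {M : ℕ} {A : Type*} (owner : Fin M → A) : Prop :=
  ∀ (a : A) (t₁ t₂ t₃ : Fin M), t₁ ≤ t₂ → t₂ ≤ t₃ →
    owner t₁ = a → owner t₃ = a → owner t₂ = a

open Classical in
/-- The (normalized) value that agent `a` assigns to the bundle received by agent `b`
under the allocation `owner`, where `V a` is the set of items valued by agent `a`:
`|A_b ∩ V_a| / |V_a|`. -/
noncomputable def discVal {M : ℕ} {A : Type*} (V : A → Finset (Fin M))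
    (owner : Fin M → A) (a b : A) : ℝ :=
  (((V a).filter fun t => owner t = b).card : ℝ) / ((V a).card : ℝ)

/-- Left endpoint (item index) of the `t`-th `K`-block, `K = n*B`: the first `B` blocks
form the left region (consecutive `K`-blocks); block `B + s` is the `K`-block starting
the `s`-th block of `K + B` items of the right region. -/
def kBlockStart (n B : ℕ) (t : Fin (B + n)) : ℕ :=
  if t.val < B then t.val * (n * B) else B * (n * B) + (t.val - B) * (n * B + B)

/-- Valued sets of the discrete instance built from a 3-PARTITION instance `(x; B)` with
`K = n*B`: agents `Sum.inl (t, _)` are the `K` agents of the `t`-th `K`-block, each valuing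
exactly the `K` items of that block; agent `Sum.inr i` is `a_i`, valuing exactly the
`K * x i` rightmost items. -/
def equitV (n B : ℕ) (x : Fin (3 * n) → ℕ) :
    ((Fin (B + n) × Fin (n * B)) ⊕ Fin (3 * n)) →
      Finset (Fin (B * (n * B) + n * (n * B + B)))
  | .inl (t, _) => Finset.univ.filter fun j =>
      kBlockStart n B t ≤ j.val ∧ j.val < kBlockStart n B t + n * B
  | .inr i => Finset.univ.filter fun j =>
      B * (n * B) + n * (n * B + B) - (n * B) * x i ≤ j.val


/-!
Write `K = n * B`. Given a solution, give each block agent one item of its own `K`-block and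
give the agents `a_i` of a triple consecutive runs of `x i` items among the `B` items that
follow the `K`-block of the run assigned to that triple. Since `x i > n`, the `K * x i` items
valued by `a_i` contain the whole right region, so every agent gets value exactly `1 / K`;
this is also proportional, as there are at least `K` agents.

Conversely, in an equitable allocation with positive values the `K` agents of a `K`-block
receive disjoint nonempty parts of its `K` items, so each gets exactly one item: the common
value is `1 / K` and the `K`-blocks are owned by their own agents. Hence `a_i` receives `x i`
items outside the `K`-blocks, and by contiguity all of them lie between two consecutive
`K`-blocks of the right region, in a single segment of `B` items. Grouping the `a_i` by
segment gives classes of sum at most `B`, hence exactly `B` since the `x i` sum to `n * B`,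
and `B / 4 < x i < B / 2` makes each class a triple.
-/

open Finset

theorem card_filter_fin_Ico {M a b : ℕ} (h : b ≤ M) :
    #{j : Fin M | a ≤ j.val ∧ j.val < b} = b - a := by
  have hmap : ({j : Fin M | a ≤ j.val ∧ j.val < b} : Finset (Fin M)).map Fin.valEmbedding =
      Ico a b := by
    ext v
    simp only [mem_map, mem_filter, mem_univ, true_and, mem_Ico, Fin.valEmbedding_apply]
    exact ⟨by rintro ⟨j, hj, rfl⟩; exact hj, fun hv => ⟨⟨v, by omega⟩, hv, rfl⟩⟩
  rw [← card_map, hmap, Nat.card_Ico]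

theorem card_filter_fin_le {M c : ℕ} : #{j : Fin M | c ≤ j.val} = M - c := by
  rw [← card_filter_fin_Ico le_rfl (a := c)]
  congr 1
  ext j
  simp

theorem exists_contigAlloc_of_tiling {A : Type*} [Fintype A] {M : ℕ} (lo len : A → ℕ)
    (hfit : ∀ a, lo a + len a ≤ M)
    (hdisj : Pairwise fun a b => lo a + len a ≤ lo b ∨ lo b + len b ≤ lo a)
    (hsum : ∑ a, len a = M) :
    ∃ owner : Fin M → A, ContigAlloc owner ∧
      ∀ j a, owner j = a ↔ lo a ≤ j.val ∧ j.val < lo a + len a := by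
  classical
  let tile (a : A) : Finset (Fin M) := {j | lo a ≤ j.val ∧ j.val < lo a + len a}
  have htile_disj : ((univ : Finset A) : Set A).PairwiseDisjoint tile := by
    intro a _ b _ hab
    refine disjoint_left.mpr fun j hja hjb => ?_
    simp only [tile, mem_filter, mem_univ, true_and] at hja hjb
    rcases hdisj hab with h | h <;> omega
  have hcover : univ.biUnion tile = univ := by
    refine eq_of_subset_of_card_le (subset_univ _) ?_
    rw [card_biUnion htile_disj, card_univ, Fintype.card_fin]
    refine (hsum.symm.trans (sum_congr rfl fun a _ => ?_)).le
    rw [card_filter_fin_Ico (hfit a)]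
    omega
  have hmem (j : Fin M) : ∃ a, j ∈ tile a := by
    simpa using (hcover.symm ▸ mem_univ j : j ∈ univ.biUnion tile)
  choose owner howner using hmem
  have howner_iff (j : Fin M) (a : A) : owner j = a ↔ j ∈ tile a :=
    ⟨fun h => h ▸ howner j, fun h => by_contra fun hne =>
      disjoint_left.mp (htile_disj (by simp) (by simp) hne) (howner j) h⟩
  simp only [tile, mem_filter, mem_univ, true_and] at howner_iff
  refine ⟨owner, fun a t₁ t₂ t₃ h₁₂ h₂₃ h₁ h₃ => ?_, howner_iff⟩
  rw [howner_iff] at h₁ h₃ ⊢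
  rw [Fin.le_def] at h₁₂ h₂₃
  omega

section ClassOffset

variable {ι κ : Type*} [Fintype ι] [LinearOrder ι] [DecidableEq κ]
  (p : ι → κ) (x : ι → ℕ)

def classOffset (i : ι) : ℕ := ∑ i' ∈ {i' | p i' = p i ∧ i' < i}, x i'

theorem classOffset_add_eq_sum_insert (i : ι) :
    classOffset p x i + x i =
      ∑ i' ∈ insert i ({i' | p i' = p i ∧ i' < i} : Finset ι), x i' := by
  rw [sum_insert (by simp), add_comm, classOffset]

theorem classOffset_add_le (i : ι) :
    classOffset p x i + x i ≤ ∑ i' ∈ {i' | p i' = p i}, x i' := by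
  rw [classOffset_add_eq_sum_insert]
  refine sum_le_sum_of_subset fun j hj => ?_
  rcases mem_insert.mp hj with rfl | hj
  · simp
  · simp_all

theorem classOffset_add_le_of_lt {i i' : ι} (hp : p i = p i') (h : i < i') :
    classOffset p x i + x i ≤ classOffset p x i' := by
  rw [classOffset_add_eq_sum_insert]
  refine sum_le_sum_of_subset fun j hj => ?_
  rcases mem_insert.mp hj with rfl | hj
  · simp [hp, h]
  · simp only [mem_filter, mem_univ, true_and] at hj ⊢
    exact ⟨hj.1.trans hp, hj.2.trans h⟩

end ClassOffset

theorem card_eq_three_of_sum_eq {ι : Type*} {s : Finset ι} {x : ι → ℕ} {B : ℕ} (hB : 0 < B)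
    (hsum : ∑ i ∈ s, x i = B) (hlb : ∀ i ∈ s, B < 4 * x i)
    (hub : ∀ i ∈ s, 2 * x i < B) :
    #s = 3 := by
  have hlow : #s • (B + 1) ≤ ∑ i ∈ s, 4 * x i := card_nsmul_le_sum _ _ _ hlb
  have hhigh : ∑ i ∈ s, 2 * x i ≤ #s • (B - 1) :=
    sum_le_card_nsmul _ _ _ fun i hi => by have := hub i hi; omega
  rw [← mul_sum, hsum, smul_eq_mul] at hlow hhigh
  rcases lt_trichotomy #s 3 with h | h | h
  · have : #s * (B - 1) ≤ 2 * (B - 1) := Nat.mul_le_mul_right _ (by omega)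
    omega
  · exact h
  · have : 4 * (B + 1) ≤ #s * (B + 1) := Nat.mul_le_mul_right _ h
    omega

section Geometry

variable {n B : ℕ}

/-- Run `s` of the right region is the `K`-block `Fin.natAdd B s` followed by the `B` items
from `segmentStart n B s` on. -/
def segmentStart (n B s : ℕ) : ℕ := B * (n * B) + s * (n * B + B) + n * B

theorem kBlockStart_castAdd (u : Fin B) :
    kBlockStart n B (Fin.castAdd n u) = u * (n * B) := if_pos u.isLt

theorem kBlockStart_natAdd (s : Fin n) :
    kBlockStart n B (Fin.natAdd B s) + n * B = segmentStart n B s := by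
  simp [kBlockStart, segmentStart]

theorem succ_mul_le_mul {s s' d : ℕ} (h : s < s') : s * d + d ≤ s' * d := by
  simpa [add_one_mul] using Nat.mul_le_mul_right d h

theorem segmentStart_add_le_of_lt {s s' : ℕ} (h : s < s') :
    segmentStart n B s + B + n * B ≤ segmentStart n B s' := by
  have := succ_mul_le_mul (d := n * B + B) h
  simp only [segmentStart]
  omega

theorem segmentStart_add_le (s : Fin n) :
    segmentStart n B s + B ≤ B * (n * B) + n * (n * B + B) := by
  have := succ_mul_le_mul (d := n * B + B) s.isLt
  simp only [segmentStart]
  omega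

theorem kBlockStart_castAdd_add_le (u : Fin B) :
    kBlockStart n B (Fin.castAdd n u) + n * B ≤ B * (n * B) := by
  rw [kBlockStart_castAdd]
  exact succ_mul_le_mul u.isLt

theorem kBlockStart_add_le (t : Fin (B + n)) :
    kBlockStart n B t + n * B ≤ B * (n * B) + n * (n * B + B) := by
  induction t using Fin.addCases with
  | left u => exact (kBlockStart_castAdd_add_le u).trans (Nat.le_add_right _ _)
  | right s =>
    rw [kBlockStart_natAdd]
    exact (Nat.le_add_right _ _).trans (segmentStart_add_le s)

theorem kBlockStart_add_le_of_lt {t t' : Fin (B + n)} (h : t < t') :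
    kBlockStart n B t + n * B ≤ kBlockStart n B t' := by
  induction t using Fin.addCases with
  | left u =>
    induction t' using Fin.addCases with
    | left u' =>
      simpa only [kBlockStart_castAdd] using
        succ_mul_le_mul (d := n * B) (show (u : ℕ) < u' from h)
    | right s' =>
      have := kBlockStart_castAdd_add_le (n := n) u
      have := kBlockStart_natAdd (B := B) s'
      simp only [segmentStart] at this
      omega
  | right s =>
    induction t' using Fin.addCases with
    | left u' => exact absurd h (by simp [Fin.lt_def]; omega)
    | right s' =>
      have := segmentStart_add_le_of_lt (n := n) (B := B) ((Fin.natAdd_lt_natAdd_iff B).mp h)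
      have := kBlockStart_natAdd (B := B) s
      have := kBlockStart_natAdd (B := B) s'
      omega

theorem kBlock_disjoint_segment (t : Fin (B + n)) (s : Fin n) :
    kBlockStart n B t + n * B ≤ segmentStart n B s ∨
      segmentStart n B s + B ≤ kBlockStart n B t := by
  induction t using Fin.addCases with
  | left u =>
    have := kBlockStart_castAdd_add_le (n := n) u
    left; simp only [segmentStart]; omega
  | right s' =>
    have := kBlockStart_natAdd (B := B) s'
    rcases lt_trichotomy (s' : ℕ) s with h | h | h
    · have := segmentStart_add_le_of_lt (n := n) (B := B) h; omega
    · left; rw [this, Fin.val_inj.mp h]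
    · have := segmentStart_add_le_of_lt (n := n) (B := B) h; omega

theorem exists_fin_mul_le_lt {j q d : ℕ} (h : j < q * d) :
    ∃ s : Fin q, s * d ≤ j ∧ j < s * d + d := by
  have hd : 0 < d := Nat.pos_of_ne_zero (by rintro rfl; simp at h)
  exact ⟨⟨j / d, Nat.div_lt_of_lt_mul (by rwa [mul_comm])⟩, Nat.div_mul_le_self _ _,
    Nat.lt_div_mul_add hd⟩

theorem mem_kBlock_or_segment {j : ℕ} (hj : j < B * (n * B) + n * (n * B + B)) :
    (∃ t : Fin (B + n), kBlockStart n B t ≤ j ∧ j < kBlockStart n B t + n * B) ∨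
      ∃ s : Fin n, segmentStart n B s ≤ j ∧ j < segmentStart n B s + B := by
  rcases lt_or_ge j (B * (n * B)) with hleft | hright
  · obtain ⟨u, h⟩ := exists_fin_mul_le_lt hleft
    exact .inl ⟨Fin.castAdd n u, by rwa [kBlockStart_castAdd]⟩
  · obtain ⟨s, h⟩ := exists_fin_mul_le_lt (show j - B * (n * B) < n * (n * B + B) by omega)
    have hblock := kBlockStart_natAdd (B := B) s
    simp only [segmentStart] at hblock
    rcases lt_or_ge (j - B * (n * B)) (s * (n * B + B) + n * B) with hK | hK
    · exact .inl ⟨Fin.natAdd B s, by omega⟩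
    · exact .inr ⟨s, by simp only [segmentStart]; omega⟩

end Geometry

section ValuedPart

variable {M : ℕ} {A : Type*} (V : A → Finset (Fin M)) (owner : Fin M → A)

open Classical in
noncomputable def valuedPart (a : A) : Finset (Fin M) := (V a).filter fun j => owner j = a

theorem discVal_self (a : A) :
    discVal V owner a a = (#(valuedPart V owner a) : ℝ) / #(V a) := rfl

theorem mem_valuedPart {a : A} {j : Fin M} :
    j ∈ valuedPart V owner a ↔ j ∈ V a ∧ owner j = a := by
  classical exact mem_filter

theorem card_biUnion_valuedPart {ι : Type*} {f : ι → A} (hf : Function.Injective f)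
    (S : Finset ι) :
    #(S.biUnion fun k => valuedPart V owner (f k)) = ∑ k ∈ S, #(valuedPart V owner (f k)) :=
  card_biUnion fun _ _ _ _ hne => disjoint_left.mpr fun _ hj hj' =>
    hne (hf (((mem_valuedPart V owner).mp hj).2.symm.trans ((mem_valuedPart V owner).mp hj').2))

theorem valuedPart_subset (a : A) : valuedPart V owner a ⊆ V a :=
  fun _ hj => ((mem_valuedPart V owner).mp hj).1

variable {V owner}

theorem card_valuedPart_eq {a : A} {lo len : ℕ} (hfit : lo + len ≤ M)
    (hown : ∀ j, owner j = a ↔ lo ≤ j.val ∧ j.val < lo + len)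
    (hV : ∀ j : Fin M, lo ≤ j.val → j.val < lo + len → j ∈ V a) :
    #(valuedPart V owner a) = len := by
  rw [← Nat.add_sub_cancel_left (n := lo) (m := len), ← card_filter_fin_Ico hfit]
  congr 1
  ext j
  simp only [mem_valuedPart, hown, mem_filter, mem_univ, true_and]
  exact ⟨And.right, fun h => ⟨hV j h.1 h.2, h⟩⟩

theorem valuedPart_nonempty_of_discVal_pos {a : A} (h : 0 < discVal V owner a a) :
    (valuedPart V owner a).Nonempty := by
  rw [← card_pos, Nat.pos_iff_ne_zero]
  intro h0
  simp [discVal_self, h0] at h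

end ValuedPart

structure IsPositiveEquitable {M : ℕ} {A : Type*} (V : A → Finset (Fin M))
    (owner : Fin M → A) : Prop where
  discVal_eq : ∀ a b, discVal V owner a a = discVal V owner b b
  discVal_pos : ∀ a, 0 < discVal V owner a a

abbrev Item (n B : ℕ) := Fin (B * (n * B) + n * (n * B + B))

abbrev Agent (n B : ℕ) := (Fin (B + n) × Fin (n * B)) ⊕ Fin (3 * n)

section Instance

variable {n B : ℕ} {x : Fin (3 * n) → ℕ}

theorem card_equitV_inl (t : Fin (B + n)) (r : Fin (n * B)) :
    #(equitV n B x (.inl (t, r))) = n * B := by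
  rw [equitV, card_filter_fin_Ico (kBlockStart_add_le t)]
  omega

theorem card_equitV_inr {i : Fin (3 * n)} (h : x i ≤ B) :
    #(equitV n B x (.inr i)) = n * B * x i := by
  have : n * B * x i ≤ B * (n * B) := by
    rw [mul_comm B]; exact Nat.mul_le_mul_left _ h
  rw [equitV, card_filter_fin_le]
  omega

theorem mem_equitV_inr {i : Fin (3 * n)} (hx : n < x i) {j : Item n B}
    (hj : B * (n * B) ≤ j.val) : j ∈ equitV n B x (.inr i) := by
  have : n * B * (n + 1) ≤ n * B * x i := Nat.mul_le_mul_left _ hx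
  have : n * (n * B + B) = n * B * (n + 1) := by ring
  simp only [equitV, mem_filter, mem_univ, true_and]
  omega

theorem mul_pos_of_agent (hub : ∀ i, 2 * x i < B) : Agent n B → 0 < n * B
  | .inl (_, r) => r.pos
  | .inr i => Nat.mul_pos (by have := i.pos; omega) (by have := hub i; omega)

end Instance

section Construction

/-- The bundle of agent `a` is `[tileStart a, tileStart a + tileLen a)`; the agents `a_i` with
`p i = s` fill the segment of run `s` in increasing order of `i`. -/
def tileStart {n : ℕ} (B : ℕ) (p : Fin (3 * n) → Fin n) (x : Fin (3 * n) → ℕ) :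
    Agent n B → ℕ
  | .inl (t, r) => kBlockStart n B t + r
  | .inr i => segmentStart n B (p i) + classOffset p x i

def tileLen {n : ℕ} (B : ℕ) (x : Fin (3 * n) → ℕ) : Agent n B → ℕ
  | .inl _ => 1
  | .inr i => x i

variable {n B : ℕ} {p : Fin (3 * n) → Fin n} {x : Fin (3 * n) → ℕ}

theorem tileStart_inr_bounds (hp : ∀ t, ∑ i ∈ {i | p i = t}, x i = B) (i : Fin (3 * n)) :
    segmentStart n B (p i) ≤ tileStart B p x (.inr i) ∧
      tileStart B p x (.inr i) + x i ≤ segmentStart n B (p i) + B := by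
  have := classOffset_add_le p x i
  rw [hp] at this
  simp only [tileStart]
  omega

theorem tile_fit (hp : ∀ t, ∑ i ∈ {i | p i = t}, x i = B) (a : Agent n B) :
    tileStart B p x a + tileLen B x a ≤ B * (n * B) + n * (n * B + B) := by
  rcases a with ⟨t, r⟩ | i
  · have := kBlockStart_add_le t
    simp only [tileStart, tileLen]
    omega
  · exact (tileStart_inr_bounds hp i).2.trans (segmentStart_add_le _)

theorem tile_disjoint (hp : ∀ t, ∑ i ∈ {i | p i = t}, x i = B) :
    Pairwise fun a b : Agent n B => tileStart B p x a + tileLen B x a ≤ tileStart B p x b ∨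
      tileStart B p x b + tileLen B x b ≤ tileStart B p x a := by
  have block_block {t t' : Fin (B + n)} (r r' : Fin (n * B)) (h : t < t') :
      kBlockStart n B t + r + 1 ≤ kBlockStart n B t' + r' := by
    have := kBlockStart_add_le_of_lt h; omega
  have block_tile (t : Fin (B + n)) (r : Fin (n * B)) (i : Fin (3 * n)) :
      kBlockStart n B t + r + 1 ≤ tileStart B p x (.inr i) ∨
        tileStart B p x (.inr i) + x i ≤ kBlockStart n B t + r := by
    have := kBlock_disjoint_segment t (p i)
    have := tileStart_inr_bounds hp i
    omega
  have tile_tile {i i' : Fin (3 * n)} (h : p i < p i') :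
      tileStart B p x (.inr i) + x i ≤ tileStart B p x (.inr i') := by
    have := segmentStart_add_le_of_lt (n := n) (B := B) h
    have := tileStart_inr_bounds hp i
    have := tileStart_inr_bounds hp i'
    omega
  rintro (⟨t, r⟩ | i) (⟨t', r'⟩ | i') hne <;>
    simp only [tileStart, tileLen] at block_tile ⊢
  · rcases lt_trichotomy t t' with h | rfl | h
    · exact .inl (block_block r r' h)
    · have : (r : ℕ) ≠ r' := fun h => hne (by rw [Fin.val_inj.mp h])
      omega
    · exact .inr (block_block r' r h)
  · exact block_tile t r i'
  · exact (block_tile t' r' i).symm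
  · rcases lt_trichotomy (p i) (p i') with h | h | h
    · exact .inl (tile_tile h)
    · rcases lt_trichotomy i i' with h' | rfl | h'
      · exact .inl (by have := classOffset_add_le_of_lt p x h h'; rw [h]; omega)
      · exact absurd rfl hne
      · exact .inr (by have := classOffset_add_le_of_lt p x h.symm h'; rw [h]; omega)
    · exact .inr (tile_tile h)

theorem sum_tileLen (hp : ∀ t, ∑ i ∈ {i | p i = t}, x i = B) :
    ∑ a : Agent n B, tileLen B x a = B * (n * B) + n * (n * B + B) := by
  have hx : ∑ i, x i = n * B := by
    rw [← sum_fiberwise univ p x]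
    simp [hp]
  simp only [Fintype.sum_sum_type, tileLen, sum_const, card_univ, Fintype.card_prod,
    Fintype.card_fin, smul_eq_mul, mul_one, hx]
  ring

theorem exists_contigAlloc_discVal_eq_of_partition (hxn : ∀ i, n < x i)
    (hp : ∀ t, ∑ i ∈ {i | p i = t}, x i = B) :
    ∃ owner : Item n B → Agent n B, ContigAlloc owner ∧
      ∀ a, discVal (equitV n B x) owner a a = 1 / (n * B : ℕ) := by
  obtain ⟨owner, hc, hown⟩ := exists_contigAlloc_of_tiling _ _ (tile_fit hp) (tile_disjoint hp)
    (sum_tileLen hp)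
  refine ⟨owner, hc, ?_⟩
  rintro (⟨t, r⟩ | i)
  · have hV (j : Item n B) (h₁ : tileStart B p x (.inl (t, r)) ≤ j.val)
        (h₂ : j.val < tileStart B p x (.inl (t, r)) + tileLen B x (.inl (t, r))) :
        j ∈ equitV n B x (.inl (t, r)) := by
      simp only [tileStart, tileLen] at h₁ h₂
      simp only [equitV, mem_filter, mem_univ, true_and]
      omega
    rw [discVal_self, card_valuedPart_eq (tile_fit hp _) (hown · _) hV, card_equitV_inl]
    simp [tileLen]
  · have hxB : x i ≤ B := hp (p i) ▸ single_le_sum (fun _ _ => Nat.zero_le _) (by simp)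
    have hV (j : Item n B) (h₁ : tileStart B p x (.inr i) ≤ j.val)
        (_ : j.val < tileStart B p x (.inr i) + tileLen B x (.inr i)) :
        j ∈ equitV n B x (.inr i) := by
      have := (tileStart_inr_bounds hp i).1
      exact mem_equitV_inr (hxn i) (by simp only [segmentStart] at this; omega)
    rw [discVal_self, card_valuedPart_eq (tile_fit hp _) (hown · _) hV, card_equitV_inr hxB]
    have : (x i : ℝ) ≠ 0 := Nat.cast_ne_zero.mpr (by have := hxn i; omega)
    simp only [tileLen, Nat.cast_mul, div_mul_cancel_right₀ this, one_div]

end Construction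

section Extraction

variable {n B : ℕ} {x : Fin (3 * n) → ℕ} {owner : Item n B → Agent n B}

theorem card_valuedPart_inl_eq_one
    (hequit : IsPositiveEquitable (equitV n B x) owner) (t : Fin (B + n)) (r : Fin (n * B)) :
    #(valuedPart (equitV n B x) owner (.inl (t, r))) = 1 := by
  set c := #(valuedPart (equitV n B x) owner (.inl (t, r)))
  have hK : (0 : ℝ) < (n * B : ℕ) := Nat.cast_pos.mpr r.pos
  have hcount (r' : Fin (n * B)) : #(valuedPart (equitV n B x) owner (.inl (t, r'))) = c := by
    have := hequit.discVal_eq (.inl (t, r')) (.inl (t, r))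
    rwa [discVal_self, discVal_self, card_equitV_inl, card_equitV_inl, div_left_inj' hK.ne',
      Nat.cast_inj] at this
  have hle : n * B * c ≤ n * B := by
    have := card_le_card (biUnion_subset.mpr fun r' _ => valuedPart_subset _ _ _ :
      univ.biUnion (fun r' : Fin (n * B) => valuedPart (equitV n B x) owner (.inl (t, r'))) ⊆
        equitV n B x (.inl (t, r)))
    rwa [card_biUnion_valuedPart _ _ (fun _ _ h => by simpa using h), sum_congr rfl
      fun r' _ => hcount r', sum_const, card_univ, Fintype.card_fin, smul_eq_mul,
      card_equitV_inl] at this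
  have := card_pos.mpr (valuedPart_nonempty_of_discVal_pos (hequit.discVal_pos (.inl (t, r))))
  have := Nat.le_of_mul_le_mul_left (hle.trans (mul_one _).ge) r.pos
  omega

theorem exists_owner_eq_inl_of_mem_kBlock
    (hequit : IsPositiveEquitable (equitV n B x) owner) {t : Fin (B + n)} {j : Item n B}
    (h₁ : kBlockStart n B t ≤ j.val) (h₂ : j.val < kBlockStart n B t + n * B) :
    ∃ r, owner j = .inl (t, r) := by
  let r₀ : Fin (n * B) := ⟨0, by omega⟩
  have hsub : univ.biUnion (fun r : Fin (n * B) =>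
      valuedPart (equitV n B x) owner (.inl (t, r))) ⊆ equitV n B x (.inl (t, r₀)) :=
    biUnion_subset.mpr fun r _ => valuedPart_subset _ _ _
  have hcover := eq_of_subset_of_card_le hsub (by
    rw [card_biUnion_valuedPart _ _ (fun _ _ h => by simpa using h),
      sum_congr rfl fun r _ => card_valuedPart_inl_eq_one hequit t r, card_equitV_inl]
    simp)
  have hj : j ∈ equitV n B x (.inl (t, r₀)) := by
    simp only [equitV, mem_filter, mem_univ, true_and]
    omega
  obtain ⟨r, -, hr⟩ := mem_biUnion.mp (hcover ▸ hj)
  exact ⟨r, ((mem_valuedPart _ _).mp hr).2⟩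

theorem card_valuedPart_inr
    (hequit : IsPositiveEquitable (equitV n B x) owner) (hub : ∀ i, 2 * x i < B)
    (i : Fin (3 * n)) : #(valuedPart (equitV n B x) owner (.inr i)) = x i := by
  have hK := mul_pos_of_agent hub (.inr i)
  have hV : (equitV n B x (.inr i)).Nonempty :=
    (valuedPart_nonempty_of_discVal_pos (hequit.discVal_pos _)).mono (valuedPart_subset _ _ _)
  have h := hequit.discVal_eq (.inr i) (.inl (⟨0, by have := i.pos; omega⟩, ⟨0, hK⟩))
  rw [discVal_self, discVal_self, card_valuedPart_inl_eq_one hequit, card_equitV_inl,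
    div_eq_div_iff (Nat.cast_ne_zero.mpr hV.card_pos.ne') (Nat.cast_ne_zero.mpr hK.ne'),
    card_equitV_inr (by have := hub i; omega)] at h
  have : #(valuedPart (equitV n B x) owner (.inr i)) * (n * B) = 1 * (n * B * x i) := by
    exact_mod_cast h
  exact Nat.eq_of_mul_eq_mul_right hK (this.trans (by ring))

theorem exists_segment_of_owner_eq_inr
    (hequit : IsPositiveEquitable (equitV n B x) owner) {i : Fin (3 * n)} {j : Item n B}
    (hj : owner j = .inr i) :
    ∃ s : Fin n, segmentStart n B s ≤ j.val ∧ j.val < segmentStart n B s + B := by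
  rcases mem_kBlock_or_segment j.isLt with ⟨t, h₁, h₂⟩ | hsegment
  · obtain ⟨r, hr⟩ := exists_owner_eq_inl_of_mem_kBlock hequit h₁ h₂
    exact absurd (hj.symm.trans hr) Sum.inr_ne_inl
  · exact hsegment

theorem segment_le_of_owner_eq_inr (hc : ContigAlloc owner)
    (hequit : IsPositiveEquitable (equitV n B x) owner) {i : Fin (3 * n)} {j j' : Item n B}
    {s s' : Fin n} (hj : owner j = .inr i) (hj' : owner j' = .inr i)
    (hjs : segmentStart n B s ≤ j.val ∧ j.val < segmentStart n B s + B)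
    (hjs' : segmentStart n B s' ≤ j'.val) : s' ≤ s := by
  by_contra! hlt
  have hgap := segmentStart_add_le_of_lt (n := n) (B := B) hlt
  have hblock := kBlockStart_natAdd (B := B) s'
  have hK : 0 < n * B := Nat.mul_pos s.pos (by omega)
  let w : Item n B := ⟨kBlockStart n B (Fin.natAdd B s'), by omega⟩
  have hw : owner w = .inr i :=
    hc _ j w j' (Fin.le_def.mpr (by simp only [w]; omega))
      (Fin.le_def.mpr (by simp only [w]; omega)) hj hj'
  obtain ⟨r, hr⟩ :=
    exists_owner_eq_inl_of_mem_kBlock (j := w) hequit le_rfl (by simp only [w]; omega)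
  exact Sum.inr_ne_inl (hw.symm.trans hr)

theorem exists_segment_forall_owner_eq_inr (hc : ContigAlloc owner)
    (hequit : IsPositiveEquitable (equitV n B x) owner) (i : Fin (3 * n)) :
    ∃ s : Fin n, ∀ j : Item n B, owner j = .inr i →
      segmentStart n B s ≤ j.val ∧ j.val < segmentStart n B s + B := by
  obtain ⟨j₀, hj₀⟩ := valuedPart_nonempty_of_discVal_pos (hequit.discVal_pos (.inr i))
  have hown₀ := ((mem_valuedPart _ _).mp hj₀).2
  obtain ⟨s₀, hs₀⟩ := exists_segment_of_owner_eq_inr hequit hown₀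
  refine ⟨s₀, fun j hj => ?_⟩
  obtain ⟨s, hs⟩ := exists_segment_of_owner_eq_inr hequit hj
  obtain rfl : s = s₀ := le_antisymm (segment_le_of_owner_eq_inr hc hequit hown₀ hj hs₀ hs.1)
    (segment_le_of_owner_eq_inr hc hequit hj hown₀ hs hs₀.1)
  exact hs

theorem exists_threePartition_of_isPositiveEquitable (hsum : ∑ i, x i = n * B)
    (hlb : ∀ i, B < 4 * x i) (hub : ∀ i, 2 * x i < B) (hc : ContigAlloc owner)
    (hequit : IsPositiveEquitable (equitV n B x) owner) :
    ∃ p : Fin (3 * n) → Fin n, ∀ t : Fin n,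
      #{i | p i = t} = 3 ∧ ∑ i ∈ {i | p i = t}, x i = B := by
  choose p hp using exists_segment_forall_owner_eq_inr hc hequit
  have hle (t : Fin n) : ∑ i ∈ {i | p i = t}, x i ≤ B := by
    have hsub : ({i | p i = t} : Finset _).biUnion
        (fun i => valuedPart (equitV n B x) owner (.inr i)) ⊆
          ({j | segmentStart n B t ≤ j.val ∧ j.val < segmentStart n B t + B} :
            Finset (Item n B)) := by
      refine biUnion_subset.mpr fun i hi j hj => ?_
      have := hp i j ((mem_valuedPart _ _).mp hj).2
      rw [(mem_filter.mp hi).2] at this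
      simpa using this
    have := card_le_card hsub
    rwa [card_biUnion_valuedPart _ _ Sum.inr_injective,
      sum_congr rfl fun i _ => card_valuedPart_inr hequit hub i,
      card_filter_fin_Ico (segmentStart_add_le t), Nat.add_sub_cancel_left] at this
  have hfib : ∀ t ∈ univ, ∑ i ∈ {i | p i = t}, x i = B := by
    refine (sum_eq_sum_iff_of_le fun t _ => hle t).mp ?_
    rw [sum_fiberwise, hsum, sum_const, card_univ, Fintype.card_fin, smul_eq_mul]
  refine ⟨p, fun t => ⟨card_eq_three_of_sum_eq ?_ (hfib t (mem_univ t)) (fun i _ => hlb i)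
    (fun i _ => hub i), hfib t (mem_univ t)⟩⟩
  have := hub ⟨0, by have := t.pos; omega⟩
  omega

end Extraction

theorem contiguous_equitable_iff_three_partition_general
    (n B : ℕ) (x : Fin (3 * n) → ℕ)
    (hsum : ∑ i, x i = n * B)
    (hlb : ∀ i, B < 4 * x i) (hub : ∀ i, 2 * x i < B) (hxn : ∀ i, n < x i) :
    ((∃ owner : Fin (B * (n * B) + n * (n * B + B)) →
        ((Fin (B + n) × Fin (n * B)) ⊕ Fin (3 * n)),
      ContigAlloc owner ∧
      (∀ a b, discVal (equitV n B x) owner a a = discVal (equitV n B x) owner b b) ∧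
      (∀ a, 0 < discVal (equitV n B x) owner a a)) ↔
    (∃ p : Fin (3 * n) → Fin n, ∀ t : Fin n,
      (Finset.univ.filter fun i => p i = t).card = 3 ∧
      ∑ i ∈ Finset.univ.filter (fun i => p i = t), x i = B)) ∧
    ((∃ owner : Fin (B * (n * B) + n * (n * B + B)) →
        ((Fin (B + n) × Fin (n * B)) ⊕ Fin (3 * n)),
      ContigAlloc owner ∧
      (∀ a, discVal (equitV n B x) owner a a ≥
        1 / (Fintype.card ((Fin (B + n) × Fin (n * B)) ⊕ Fin (3 * n)) : ℝ)) ∧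
      (∀ a b, discVal (equitV n B x) owner a a = discVal (equitV n B x) owner b b)) ↔
    (∃ p : Fin (3 * n) → Fin n, ∀ t : Fin n,
      (Finset.univ.filter fun i => p i = t).card = 3 ∧
      ∑ i ∈ Finset.univ.filter (fun i => p i = t), x i = B)) := by
  have hK (a : Agent n B) : (0 : ℝ) < (n * B : ℕ) := Nat.cast_pos.mpr (mul_pos_of_agent hub a)
  have hKcard (a : Agent n B) : ((n * B : ℕ) : ℝ) ≤ Fintype.card (Agent n B) := by
    have : 0 < B + n := by have := Nat.pos_of_mul_pos_left (mul_pos_of_agent hub a); omega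
    simp only [Fintype.card_sum, Fintype.card_prod, Fintype.card_fin]
    exact_mod_cast (Nat.le_mul_of_pos_left _ this).trans (Nat.le_add_right _ _)
  refine ⟨⟨?_, ?_⟩, ⟨?_, ?_⟩⟩
  · rintro ⟨owner, hc, heq, hpos⟩
    exact exists_threePartition_of_isPositiveEquitable hsum hlb hub hc ⟨heq, hpos⟩
  · rintro ⟨p, hp⟩
    obtain ⟨owner, hc, hval⟩ := exists_contigAlloc_discVal_eq_of_partition hxn fun t => (hp t).2
    exact ⟨owner, hc, fun a b => by rw [hval, hval],
      fun a => by rw [hval]; exact one_div_pos.mpr (hK a)⟩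
  · rintro ⟨owner, hc, hprop, heq⟩
    refine exists_threePartition_of_isPositiveEquitable hsum hlb hub hc ⟨heq, fun a => ?_⟩
    exact (one_div_pos.mpr (Nat.cast_pos.mpr (Fintype.card_pos_iff.mpr ⟨a⟩))).trans_le (hprop a)
  · rintro ⟨p, hp⟩
    obtain ⟨owner, hc, hval⟩ := exists_contigAlloc_discVal_eq_of_partition hxn fun t => (hp t).2
    exact ⟨owner, hc, fun a => by rw [hval]; exact one_div_le_one_div_of_le (hK a) (hKcard a),
      fun a b => by rw [hval, hval]⟩

/-- (i) The discrete instance admits a contiguous equitable allocation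
in which every agent receives strictly positive value iff the 3-PARTITION instance has a
solution; (ii) it admits a contiguous allocation that is both proportional and equitable
iff the 3-PARTITION instance has a solution. -/
theorem contiguous_equitable_iff_three_partition
    (n B : ℕ) (hn : 0 < n) (x : Fin (3 * n) → ℕ)
    (hpos : ∀ i, 0 < x i) (hsum : ∑ i, x i = n * B)
    (hlb : ∀ i, B < 4 * x i) (hub : ∀ i, 2 * x i < B) (hxn : ∀ i, n < x i) :
    ((∃ owner : Fin (B * (n * B) + n * (n * B + B)) →
        ((Fin (B + n) × Fin (n * B)) ⊕ Fin (3 * n)),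
      ContigAlloc owner ∧
      (∀ a b, discVal (equitV n B x) owner a a = discVal (equitV n B x) owner b b) ∧
      (∀ a, 0 < discVal (equitV n B x) owner a a)) ↔
    (∃ p : Fin (3 * n) → Fin n, ∀ t : Fin n,
      (Finset.univ.filter fun i => p i = t).card = 3 ∧
      ∑ i ∈ Finset.univ.filter (fun i => p i = t), x i = B)) ∧
    ((∃ owner : Fin (B * (n * B) + n * (n * B + B)) →
        ((Fin (B + n) × Fin (n * B)) ⊕ Fin (3 * n)),
      ContigAlloc owner ∧
      (∀ a, discVal (equitV n B x) owner a a ≥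
        1 / (Fintype.card ((Fin (B + n) × Fin (n * B)) ⊕ Fin (3 * n)) : ℝ)) ∧
      (∀ a b, discVal (equitV n B x) owner a a = discVal (equitV n B x) owner b b)) ↔
    (∃ p : Fin (3 * n) → Fin n, ∀ t : Fin n,
      (Finset.univ.filter fun i => p i = t).card = 3 ∧
      ∑ i ∈ Finset.univ.filter (fun i => p i = t), x i = B)) :=
  contiguous_equitable_iff_three_partition_general n B x hsum hlb hub hxn
end
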